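/- The lattice D4 ⊕ A2 ⊕ A2 cannot be embedded in the odd unimodular lattice I_{1,8}; that is, there is no 9 × 8 integer matrix M such that Mᵀ · G(I_{1,8}) · M equals the Gram matrix of D4 ⊕ 2A2. -/

import Mathlib

/-!
Reduce an embedding `M` modulo 3. Over `𝔽₃` the form of `I_{1,8}` stays nondegenerate, while
`D₄ ⊕ 2A₂` acquires a 2-dimensional radical (each `A₂` has determinant 3). An injective `M` would
map this radical into `W ∩ W^⊥`, where `W` is the 8-dimensional column space of `M`, and `W^⊥` is
only 1-dimensional; hence `M x ≡ 0 (mod 3)` for some integral `x ≢ 0`. Then `R x ≡ 0 (mod 3)`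
and `xᵀ R x = (M x)ᵀ G (M x) ≡ 0 (mod 9)`, i.e. `x / 3` is an isotropic element of the 3-part of
the discriminant form of `D₄ ⊕ 2A₂`. But that part is `(ℤ/3)²` with form `-2(a² + b²)/3`, which
is anisotropic since `-1` is not a square mod 3.
-/

open Matrix

/-- Gram matrix of the ambient lattice (9 × 9). -/
def ambientGram : Matrix (Fin 9) (Fin 9) ℤ :=
  !![1, 0, 0, 0, 0, 0, 0, 0, 0;
      0, -1, 0, 0, 0, 0, 0, 0, 0;
      0, 0, -1, 0, 0, 0, 0, 0, 0;
      0, 0, 0, -1, 0, 0, 0, 0, 0;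
      0, 0, 0, 0, -1, 0, 0, 0, 0;
      0, 0, 0, 0, 0, -1, 0, 0, 0;
      0, 0, 0, 0, 0, 0, -1, 0, 0;
      0, 0, 0, 0, 0, 0, 0, -1, 0;
      0, 0, 0, 0, 0, 0, 0, 0, -1]

/-- Gram matrix of the root lattice to be embedded (8 × 8). -/
def rootGram : Matrix (Fin 8) (Fin 8) ℤ :=
  !![-2, 1, 0, 0, 0, 0, 0, 0;
      1, -2, 1, 1, 0, 0, 0, 0;
      0, 1, -2, 0, 0, 0, 0, 0;
      0, 1, 0, -2, 0, 0, 0, 0;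
      0, 0, 0, 0, -2, 1, 0, 0;
      0, 0, 0, 0, 1, -2, 0, 0;
      0, 0, 0, 0, 0, 0, -2, 1;
      0, 0, 0, 0, 0, 0, 1, -2]

open Module LinearMap

theorem LinearMap.finrank_ker_comp_le_of_injective {K V W U : Type*} [Field K] [AddCommGroup V]
    [Module K V] [AddCommGroup W] [Module K W] [AddCommGroup U] [Module K U]
    [FiniteDimensional K W] {f : V →ₗ[K] W} (hf : Function.Injective f) (g : W →ₗ[K] U) :
    finrank K (ker (g ∘ₗ f)) ≤ finrank K (ker g) :=
  finrank_le_finrank_of_injective (f := f.restrict fun _ hx ↦ hx) fun _ _ hxy ↦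
    Subtype.ext (hf (congrArg Subtype.val hxy))

namespace Matrix

section Field

variable {K m n : Type*} [Field K] [Fintype n]

theorem rank_eq_card_of_injective {M : Matrix m n K} (hM : Function.Injective M.mulVec) :
    M.rank = Fintype.card n := by
  have := M.mulVecLin.finrank_range_add_finrank_ker
  rwa [ker_eq_bot.mpr hM, finrank_bot, add_zero, finrank_fintype_fun_eq_card] at this

theorem finrank_ker_transpose_mul_mul_add_card_le [Fintype m] [DecidableEq m] {G : Matrix m m K}
    (hG : IsUnit G.det) {M : Matrix m n K} (hM : Function.Injective M.mulVec) :
    finrank K (ker (Mᵀ * G * M).mulVecLin) + Fintype.card n ≤ Fintype.card m := by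
  have hrank : finrank K (range (Mᵀ * G).mulVecLin) = Fintype.card n := by
    rw [← Matrix.rank, rank_mul_eq_left_of_isUnit_det G _ hG, rank_transpose,
      rank_eq_card_of_injective hM]
  have hker := (Mᵀ * G).mulVecLin.finrank_range_add_finrank_ker
  have hle : finrank K (ker (Mᵀ * G * M).mulVecLin) ≤ finrank K (ker (Mᵀ * G).mulVecLin) := by
    rw [mulVecLin_mul]
    exact finrank_ker_comp_le_of_injective hM _
  rw [finrank_fintype_fun_eq_card] at hker
  omega

end Field

section CommRing

variable {R m n : Type*} [CommRing R] [Fintype m] [Fintype n] (G : Matrix m m R)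
  {M : Matrix m n R} {x : n → R} {p : R} {y : m → R}

theorem transpose_mul_mul_mulVec_of_mulVec_eq_smul (h : M *ᵥ x = p • y) :
    (Mᵀ * G * M) *ᵥ x = p • ((Mᵀ * G) *ᵥ y) := by
  rw [← mulVec_mulVec, h, mulVec_smul]

theorem dotProduct_transpose_mul_mul_mulVec_of_mulVec_eq_smul (h : M *ᵥ x = p • y) :
    x ⬝ᵥ (Mᵀ * G * M) *ᵥ x = p ^ 2 * (y ⬝ᵥ G *ᵥ y) := by
  rw [Matrix.mul_assoc, ← mulVec_mulVec, ← mulVec_mulVec, dotProduct_mulVec, vecMul_transpose, h,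
    mulVec_smul, smul_dotProduct, dotProduct_smul, smul_eq_mul, smul_eq_mul, ← mul_assoc, sq]

end CommRing

theorem exists_mulVec_cast_eq_smul_of_map_mulVec_eq_zero {m n : Type*} [Fintype n] {p : ℕ}
    {M : Matrix m n ℤ} {c : n → ZMod p} (hc : M.map (Int.castRingHom (ZMod p)) *ᵥ c = 0) :
    ∃ y, M *ᵥ (fun j ↦ (c j).cast) = (p : ℤ) • y := by
  have hc' : Int.castRingHom (ZMod p) ∘ (fun j ↦ (c j).cast) = c :=
    funext fun j ↦ ZMod.intCast_zmod_cast (c j)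
  have hdvd (i : m) : (p : ℤ) ∣ (M *ᵥ fun j ↦ (c j).cast) i := by
    rw [← ZMod.intCast_zmod_eq_zero_iff_dvd, ← eq_intCast (Int.castRingHom (ZMod p)),
      RingHom.map_mulVec, hc', hc, Pi.zero_apply]
  choose y hy using hdvd
  exact ⟨y, funext hy⟩

end Matrix

theorem ambientGram_mul_self : ambientGram * ambientGram = 1 := by decide

theorem isUnit_det_ambientGram_map_zmod_three :
    IsUnit (ambientGram.map (Int.castRingHom (ZMod 3))).det :=
  isUnit_det_of_right_inverse (B := ambientGram.map (Int.castRingHom (ZMod 3))) <| by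
    rw [← Matrix.map_mul, ambientGram_mul_self, Matrix.map_one _ (map_zero _) (map_one _)]

theorem two_le_finrank_ker_rootGram_map_zmod_three :
    2 ≤ finrank (ZMod 3) (ker (rootGram.map (Int.castRingHom (ZMod 3))).mulVecLin) := by
  let u : Fin 8 → ZMod 3 := ![0, 0, 0, 0, 1, -1, 0, 0]
  let v : Fin 8 → ZMod 3 := ![0, 0, 0, 0, 0, 0, 1, -1]
  have huv : LinearIndependent (ZMod 3) ![u, v] := by
    refine LinearIndependent.pair_iff.2 fun s t hst ↦ ⟨?_, ?_⟩
    · simpa [u, v] using congrFun hst 4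
    · simpa [u, v] using congrFun hst 6
  have hspan : Submodule.span (ZMod 3) (Set.range ![u, v]) ≤
      ker (rootGram.map (Int.castRingHom (ZMod 3))).mulVecLin := by
    rw [Submodule.span_le, Set.range_subset_iff]
    intro i
    fin_cases i <;> simp only [SetLike.mem_coe, mem_ker, mulVecLin_apply] <;> decide
  simpa [finrank_span_eq_card huv] using Submodule.finrank_mono hspan

theorem exists_ne_zero_mulVec_map_zmod_three_eq_zero {M : Matrix (Fin 9) (Fin 8) ℤ}
    (hM : Mᵀ * ambientGram * M = rootGram) :
    ∃ c ≠ 0, M.map (Int.castRingHom (ZMod 3)) *ᵥ c = 0 := by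
  by_contra! h
  have hinj : Function.Injective (M.map (Int.castRingHom (ZMod 3))).mulVec :=
    (injective_iff_map_eq_zero (M.map (Int.castRingHom (ZMod 3))).mulVecLin).2
      fun c hc ↦ by_contra fun hc0 ↦ h c hc0 hc
  have hle := finrank_ker_transpose_mul_mul_add_card_le isUnit_det_ambientGram_map_zmod_three hinj
  rw [← transpose_map, ← Matrix.map_mul, ← Matrix.map_mul, hM, Fintype.card_fin,
    Fintype.card_fin] at hle
  have := two_le_finrank_ker_rootGram_map_zmod_three
  omega

theorem three_dvd_of_three_dvd_sq_add_sq {a b : ℤ} (h : 3 ∣ a ^ 2 + b ^ 2) : 3 ∣ a ∧ 3 ∣ b := by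
  have hF₃ : ∀ a b : ZMod 3, a ^ 2 + b ^ 2 = 0 → a = 0 ∧ b = 0 := by decide
  have hcast (c : ℤ) : 3 ∣ c ↔ (c : ZMod 3) = 0 := by
    exact_mod_cast (ZMod.intCast_zmod_eq_zero_iff_dvd c 3).symm
  rw [hcast] at h
  push_cast at h
  simpa only [hcast] using hF₃ _ _ h

theorem rootGram_mulVec (x : Fin 8 → ℤ) :
    rootGram *ᵥ x = ![-2 * x 0 + x 1, x 0 - 2 * x 1 + x 2 + x 3, x 1 - 2 * x 2, x 1 - 2 * x 3,
      -2 * x 4 + x 5, x 4 - 2 * x 5, -2 * x 6 + x 7, x 6 - 2 * x 7] := by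
  ext i
  fin_cases i <;> simp [rootGram, mulVec, dotProduct, Fin.sum_univ_eight, sub_eq_add_neg]

theorem dotProduct_rootGram_mulVec (x : Fin 8 → ℤ) :
    x ⬝ᵥ rootGram *ᵥ x =
      -2 * (x 0 ^ 2 + x 1 ^ 2 + x 2 ^ 2 + x 3 ^ 2 + x 4 ^ 2 + x 5 ^ 2 + x 6 ^ 2 + x 7 ^ 2) +
        2 * (x 0 * x 1 + x 1 * x 2 + x 1 * x 3 + x 4 * x 5 + x 6 * x 7) := by
  rw [rootGram_mulVec]
  simp only [dotProduct, Fin.sum_univ_eight, cons_val]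
  ring

theorem three_dvd_of_rootGram_isotropic_mod_three (x : Fin 8 → ℤ)
    (hRx : ∀ i, 3 ∣ (rootGram *ᵥ x) i) (hQx : 9 ∣ x ⬝ᵥ rootGram *ᵥ x) (i : Fin 8) :
    3 ∣ x i := by
  simp only [rootGram_mulVec, Fin.forall_fin_succ, cons_val_zero, cons_val_succ,
    IsEmpty.forall_iff, and_true] at hRx
  -- `det D₄ = 4` is prime to 3, so `R x ≡ 0` kills `x` on the `D₄` block mod 3.
  obtain ⟨a0, ha0⟩ : 3 ∣ x 0 := by omega
  obtain ⟨a1, ha1⟩ : 3 ∣ x 1 := by omega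
  obtain ⟨a2, ha2⟩ : 3 ∣ x 2 := by omega
  obtain ⟨a3, ha3⟩ : 3 ∣ x 3 := by omega
  obtain ⟨s, hs⟩ : 3 ∣ x 4 + x 5 := by omega
  obtain ⟨t, ht⟩ : 3 ∣ x 6 + x 7 := by omega
  have hQ : x ⬝ᵥ rootGram *ᵥ x = 9 * (-2 * (a0 ^ 2 + a1 ^ 2 + a2 ^ 2 + a3 ^ 2)
      + 2 * (a0 * a1 + a1 * a2 + a1 * a3) + 2 * (x 4 * s - s ^ 2) + 2 * (x 6 * t - t ^ 2))
      - 6 * (x 4 ^ 2 + x 6 ^ 2) := by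
    rw [dotProduct_rootGram_mulVec, show x 5 = 3 * s - x 4 by omega,
      show x 7 = 3 * t - x 6 by omega, ha0, ha1, ha2, ha3]
    ring
  obtain ⟨h4, h6⟩ := three_dvd_of_three_dvd_sq_add_sq (a := x 4) (b := x 6) (by omega)
  fin_cases i <;> simp only [Fin.zero_eta, Fin.mk_one, Fin.reduceFinMk] <;> omega

theorem stmt_13 :
    ¬ ∃ M : Matrix (Fin 9) (Fin 8) ℤ,
      Mᵀ * ambientGram * M = rootGram := by
  rintro ⟨M, hM⟩
  obtain ⟨c, hc0, hMc⟩ := exists_ne_zero_mulVec_map_zmod_three_eq_zero hM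
  obtain ⟨y, hMy⟩ := exists_mulVec_cast_eq_smul_of_map_mulVec_eq_zero hMc
  set x : Fin 8 → ℤ := fun i ↦ (c i).cast
  have hRx (i : Fin 8) : 3 ∣ (rootGram *ᵥ x) i := by
    rw [← hM, transpose_mul_mul_mulVec_of_mulVec_eq_smul _ hMy]
    exact dvd_mul_right _ _
  have hQx : 9 ∣ x ⬝ᵥ rootGram *ᵥ x := by
    rw [← hM, dotProduct_transpose_mul_mul_mulVec_of_mulVec_eq_smul _ hMy]
    exact ⟨y ⬝ᵥ ambientGram *ᵥ y, by norm_num⟩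
  refine hc0 (funext fun i ↦ ?_)
  rw [Pi.zero_apply, ← ZMod.intCast_zmod_cast (c i), ZMod.intCast_zmod_eq_zero_iff_dvd]
  exact three_dvd_of_rootGram_isotropic_mod_three x hRx hQx i
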